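/- arXiv:1411.0702 — 3 statements merged into one kernel-verified Lean document; each statement's English description precedes it below -/
import Mathlib

section
/- Let v₁, v₂ ∈ ℝ³ be linearly independent and let w₁, w₂ ∈ ℝ³ satisfy vᵢ·wⱼ + vⱼ·wᵢ = 0 for all i, j ∈ {1,2}. Then there exists a unique vector Ω ∈ ℝ³ such that wᵢ = Ω × vᵢ for i = 1, 2, where × denotes the cross product in ℝ³. -/
/-!
Write `n = a ⨯₃ b`. Uniqueness: if `u ⨯₃ a = u ⨯₃ b = 0`, then `u` is a multiple `c • a`, and
`c • n = u ⨯₃ b = 0` forces `c = 0`. Existence: expanding `p` in the basis dual to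
`a, b, n` shows that `p ⬝ᵥ a = 0` gives `p = Ω ⨯₃ a` for
`Ω = (n ⬝ᵥ n)⁻¹ • ((q ⬝ᵥ n) • a - (p ⬝ᵥ n) • b + (p ⬝ᵥ b) • n)`. Under `a ⬝ᵥ q + b ⬝ᵥ p = 0` the
last coefficient is `-(q ⬝ᵥ a)`, so this formula is symmetric under `(a, p) ↔ (b, q)` and the same
`Ω` gives `q = Ω ⨯₃ b`.
-/

open Matrix

section CrossProduct

variable {F : Type*}

/-- The bases `a, b, a ⨯₃ b` and `b ⨯₃ (a ⨯₃ b), (a ⨯₃ b) ⨯₃ a, a ⨯₃ b` are dual up to the factor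
`(a ⨯₃ b) ⬝ᵥ (a ⨯₃ b)`. -/
theorem cross_dotProduct_cross_smul_eq [CommRing F] (a b p : Fin 3 → F) :
    ((a ⨯₃ b) ⬝ᵥ (a ⨯₃ b)) • p = (p ⬝ᵥ a) • (b ⨯₃ (a ⨯₃ b)) + (p ⬝ᵥ b) • ((a ⨯₃ b) ⨯₃ a)
      + (p ⬝ᵥ (a ⨯₃ b)) • (a ⨯₃ b) := by
  ext k
  fin_cases k <;>
    simp [cross_apply, dotProduct, Fin.sum_univ_three] <;> ring

variable [Field F]

theorem exists_eq_smul_of_cross_eq_zero {a u : Fin 3 → F} (ha : a ≠ 0) (h : u ⨯₃ a = 0) :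
    ∃ c : F, u = c • a := by
  have hdep : ¬LinearIndependent F ![a, u] := by
    rw [← crossProduct_ne_zero_iff_linearIndependent, not_not, ← cross_anticomm, h, neg_zero]
  rw [LinearIndependent.pair_iff' ha, not_forall_not] at hdep
  obtain ⟨c, hc⟩ := hdep
  exact ⟨c, hc.symm⟩

theorem eq_of_cross_eq_of_cross_eq {a b x y : Fin 3 → F} (hab : a ⨯₃ b ≠ 0)
    (ha : x ⨯₃ a = y ⨯₃ a) (hb : x ⨯₃ b = y ⨯₃ b) : x = y := by
  have ha0 : a ≠ 0 := by
    rintro rfl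
    simp at hab
  obtain ⟨c, hc⟩ := exists_eq_smul_of_cross_eq_zero ha0
    (by rw [map_sub, LinearMap.sub_apply, ha, sub_self] : (x - y) ⨯₃ a = 0)
  have hcb : c • (a ⨯₃ b) = 0 := by
    rw [← LinearMap.map_smul₂, ← hc, map_sub, LinearMap.sub_apply, hb, sub_self]
  have hc0 : c = 0 := (smul_eq_zero.mp hcb).resolve_right hab
  rw [← sub_eq_zero, hc, hc0, zero_smul]

noncomputable def crossPreimage (a b p q : Fin 3 → F) : Fin 3 → F :=
  ((a ⨯₃ b) ⬝ᵥ (a ⨯₃ b))⁻¹ •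
    ((q ⬝ᵥ (a ⨯₃ b)) • a - (p ⬝ᵥ (a ⨯₃ b)) • b + (p ⬝ᵥ b) • (a ⨯₃ b))

theorem crossPreimage_cross_left {a b p : Fin 3 → F} (q : Fin 3 → F)
    (hab : (a ⨯₃ b) ⬝ᵥ (a ⨯₃ b) ≠ 0) (hp : p ⬝ᵥ a = 0) :
    crossPreimage a b p q ⨯₃ a = p := by
  have hdecomp := cross_dotProduct_cross_smul_eq a b p
  rw [hp, zero_smul, zero_add] at hdecomp
  rw [crossPreimage, LinearMap.map_smul₂, map_add, map_sub, LinearMap.add_apply,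
    LinearMap.sub_apply, LinearMap.map_smul₂, LinearMap.map_smul₂, LinearMap.map_smul₂,
    cross_self, ← cross_anticomm a b, smul_zero, zero_sub, smul_neg, neg_neg, add_comm,
    ← hdecomp, smul_smul, inv_mul_cancel₀ hab, one_smul]

theorem crossPreimage_comm {a b p q : Fin 3 → F} (h : a ⬝ᵥ q + b ⬝ᵥ p = 0) :
    crossPreimage b a q p = crossPreimage a b p q := by
  have hqa : q ⬝ᵥ a = -(p ⬝ᵥ b) := by
    rw [dotProduct_comm q, dotProduct_comm p, eq_neg_iff_add_eq_zero, h]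
  simp only [crossPreimage, ← cross_anticomm a b, dotProduct_neg, neg_dotProduct, neg_neg,
    neg_smul, smul_neg, hqa]
  congr 1
  abel

theorem crossPreimage_cross_right {a b p q : Fin 3 → F}
    (hab : (a ⨯₃ b) ⬝ᵥ (a ⨯₃ b) ≠ 0) (hq : q ⬝ᵥ b = 0) (h : a ⬝ᵥ q + b ⬝ᵥ p = 0) :
    crossPreimage a b p q ⨯₃ b = q := by
  rw [← crossPreimage_comm h]
  refine crossPreimage_cross_left p ?_ hq
  rwa [← cross_anticomm, neg_dotProduct, dotProduct_neg, neg_neg]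

end CrossProduct

/-- If `v 0, v 1 ∈ ℝ³` are linearly independent and `w 0, w 1 ∈ ℝ³` satisfy
`vᵢ·wⱼ + vⱼ·wᵢ = 0` for all `i, j`, then there is a unique `Ω ∈ ℝ³` with `wᵢ = Ω × vᵢ`. -/
theorem exists_unique_bending_field_pointwise
    (v w : Fin 2 → Fin 3 → ℝ)
    (hv : LinearIndependent ℝ v)
    (hw : ∀ i j : Fin 2, v i ⬝ᵥ w j + v j ⬝ᵥ w i = 0) :
    ∃! Ω : Fin 3 → ℝ, ∀ i : Fin 2, w i = Ω ⨯₃ v i := by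
  have hn : v 0 ⨯₃ v 1 ≠ 0 := by
    rw [← FinVec.etaExpand_eq v] at hv
    exact crossProduct_ne_zero_iff_linearIndependent.mpr hv
  have hd : (v 0 ⨯₃ v 1) ⬝ᵥ (v 0 ⨯₃ v 1) ≠ 0 := mt dotProduct_self_eq_zero.mp hn
  have hw₀ : w 0 ⬝ᵥ v 0 = 0 := by linarith [hw 0 0, dotProduct_comm (w 0) (v 0)]
  have hw₁ : w 1 ⬝ᵥ v 1 = 0 := by linarith [hw 1 1, dotProduct_comm (w 1) (v 1)]
  refine ⟨crossPreimage (v 0) (v 1) (w 0) (w 1), fun i => ?_, fun Ω hΩ => ?_⟩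
  · fin_cases i
    · exact (crossPreimage_cross_left _ hd hw₀).symm
    · exact (crossPreimage_cross_right hd hw₁ (hw 0 1)).symm
  · exact eq_of_cross_eq_of_cross_eq hn
      (by rw [← hΩ 0, crossPreimage_cross_left _ hd hw₀])
      (by rw [← hΩ 1, crossPreimage_cross_right hd hw₁ (hw 0 1)])
end

section
/- Let S ⊆ ℝ² be an open set and let u : ℝ² → ℝ³ be smooth on S with ∂₁u(x) and ∂₂u(x) linearly independent at every x ∈ S. Let τ : ℝ² → ℝ³ be smooth on S and satisfy ∂ᵢu·∂ⱼτ + ∂ⱼu·∂ᵢτ = 0 on S for all i, j ∈ {1,2}. Then there exists a unique map Ω : S → ℝ³ such that ∂ᵢτ = Ω × ∂ᵢu on S for i = 1, 2; this Ω is smooth on S and satisfies ∂₁Ω × ∂₂u = ∂₂Ω × ∂₁u on S (equivalently, the ℝ³-valued 1-form Ω × du is closed). -/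
open Matrix Set Filter Topology

noncomputable section

/-- The `i`-th partial derivative of a map `ℝ² → ℝ³`. -/
def pdv (i : Fin 2) (f : (Fin 2 → ℝ) → (Fin 3 → ℝ)) (x : Fin 2 → ℝ) : Fin 3 → ℝ :=
  fderiv ℝ f x (Pi.single i 1)

/-! ### Pointwise vector algebra lemmas -/

lemma smul_cross3 (r : ℝ) (a b : Fin 3 → ℝ) : (r • a) ⨯₃ b = r • (a ⨯₃ b) := by
  funext k; fin_cases k <;>
    simp [cross_apply, Matrix.vecHead, Matrix.vecTail, Pi.smul_apply, smul_eq_mul] <;> ring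

lemma sub_cross3 (a b c : Fin 3 → ℝ) : (a - b) ⨯₃ c = a ⨯₃ c - b ⨯₃ c := by
  funext k; fin_cases k <;>
    simp [cross_apply, Matrix.vecHead, Matrix.vecTail] <;> ring

lemma exA (e₁ e₂ t₁ t₂ : Fin 3 → ℝ) :
    ((t₂ ⬝ᵥ (e₁ ⨯₃ e₂)) • e₁ - (t₁ ⬝ᵥ (e₁ ⨯₃ e₂)) • e₂ + (t₁ ⬝ᵥ e₂) • (e₁ ⨯₃ e₂)) ⨯₃ e₁
      + (t₁ ⬝ᵥ e₁) • (e₂ ⨯₃ (e₁ ⨯₃ e₂))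
      = ((e₁ ⨯₃ e₂) ⬝ᵥ (e₁ ⨯₃ e₂)) • t₁ := by
  funext k; fin_cases k <;>
    simp [cross_apply, dotProduct, Fin.sum_univ_three, Matrix.vecHead, Matrix.vecTail,
      Pi.smul_apply, smul_eq_mul] <;> ring

lemma exB (e₁ e₂ t₁ t₂ : Fin 3 → ℝ) :
    ((t₂ ⬝ᵥ (e₁ ⨯₃ e₂)) • e₁ - (t₁ ⬝ᵥ (e₁ ⨯₃ e₂)) • e₂ + (t₁ ⬝ᵥ e₂) • (e₁ ⨯₃ e₂)) ⨯₃ e₂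
      + (t₂ ⬝ᵥ e₁ + t₁ ⬝ᵥ e₂) • (e₂ ⨯₃ (e₁ ⨯₃ e₂))
      + (t₂ ⬝ᵥ e₂) • ((e₁ ⨯₃ e₂) ⨯₃ e₁)
      = ((e₁ ⨯₃ e₂) ⬝ᵥ (e₁ ⨯₃ e₂)) • t₂ := by
  funext k; fin_cases k <;>
    simp [cross_apply, dotProduct, Fin.sum_univ_three, Matrix.vecHead, Matrix.vecTail,
      Pi.smul_apply, smul_eq_mul] <;> ring

lemma uniqA (e₁ e₂ w : Fin 3 → ℝ) :
    ((e₁ ⨯₃ e₂) ⬝ᵥ (e₁ ⨯₃ e₂)) * (w ⬝ᵥ w)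
      = (w ⬝ᵥ e₁) * ((e₁ ⨯₃ e₂) ⬝ᵥ (w ⨯₃ e₂))
        - (w ⬝ᵥ e₂) * ((e₁ ⨯₃ e₂) ⬝ᵥ (w ⨯₃ e₁))
        + (e₂ ⬝ᵥ (w ⨯₃ e₁)) ^ 2 := by
  simp [cross_apply, dotProduct, Fin.sum_univ_three, Matrix.vecHead, Matrix.vecTail]; ring

lemma bcb (b a : Fin 3 → ℝ) : b ⨯₃ (a ⨯₃ b) = (b ⬝ᵥ b) • a - (b ⬝ᵥ a) • b := by
  funext k; fin_cases k <;>
    simp [cross_apply, dotProduct, Fin.sum_univ_three, Matrix.vecHead, Matrix.vecTail,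
      Pi.smul_apply, smul_eq_mul] <;> ring

lemma cross_dot_ne {a b : Fin 3 → ℝ} (h : LinearIndependent ℝ ![a, b]) :
    (a ⨯₃ b) ⬝ᵥ (a ⨯₃ b) ≠ 0 := by
  intro h0
  have hn : a ⨯₃ b = 0 := dotProduct_self_eq_zero.mp h0
  rw [linearIndependent_fin2] at h
  obtain ⟨hb, hab⟩ := h
  simp only [Matrix.cons_val_one, Matrix.head_cons, Matrix.cons_val_zero] at hb hab
  have hbb : b ⬝ᵥ b ≠ 0 := fun hz => hb (dotProduct_self_eq_zero.mp hz)
  have key := bcb b a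
  rw [hn] at key
  simp only [map_zero] at key
  have ha : a = ((b ⬝ᵥ b)⁻¹ * (b ⬝ᵥ a)) • b := by
    have h1 : (b ⬝ᵥ b) • a = (b ⬝ᵥ a) • b := by
      have := key.symm
      rwa [sub_eq_zero] at this
    calc a = (b ⬝ᵥ b)⁻¹ • ((b ⬝ᵥ b) • a) := (inv_smul_smul₀ hbb a).symm
      _ = (b ⬝ᵥ b)⁻¹ • ((b ⬝ᵥ a) • b) := by rw [h1]
      _ = ((b ⬝ᵥ b)⁻¹ * (b ⬝ᵥ a)) • b := by rw [smul_smul]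
  exact hab _ ha.symm

lemma key_uniq {e₁ e₂ w : Fin 3 → ℝ} (hN : (e₁ ⨯₃ e₂) ⬝ᵥ (e₁ ⨯₃ e₂) ≠ 0)
    (hw1 : w ⨯₃ e₁ = 0) (hw2 : w ⨯₃ e₂ = 0) : w = 0 := by
  have h : ((e₁ ⨯₃ e₂) ⬝ᵥ (e₁ ⨯₃ e₂)) * (w ⬝ᵥ w) = 0 := by
    rw [uniqA e₁ e₂ w, hw1, hw2]; simp
  have : w ⬝ᵥ w = 0 := by
    rcases mul_eq_zero.mp h with h' | h'
    · exact absurd h' hN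
    · exact h'
  exact dotProduct_self_eq_zero.mp this

/-! ### Analysis helper lemmas -/

lemma pdv_smooth {f : (Fin 2 → ℝ) → (Fin 3 → ℝ)} {S : Set (Fin 2 → ℝ)}
    (hf : ContDiffOn ℝ (⊤ : ℕ∞) f S) (hS : IsOpen S) (i : Fin 2) :
    ContDiffOn ℝ (⊤ : ℕ∞) (pdv i f) S := by
  have h := hf.fderiv_of_isOpen (m := (⊤ : ℕ∞)) hS (by simp)
  exact (ContinuousLinearMap.apply ℝ (Fin 3 → ℝ) (Pi.single i 1)).contDiff.comp_contDiffOn h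

lemma diffAt_of_contDiffOn {E F : Type*} [NormedAddCommGroup E] [NormedSpace ℝ E]
    [NormedAddCommGroup F] [NormedSpace ℝ F]
    {f : E → F} {S : Set E} (hf : ContDiffOn ℝ (⊤ : ℕ∞) f S) (hS : IsOpen S) {x : E} (hx : x ∈ S) :
    DifferentiableAt ℝ f x :=
  (hf.differentiableOn (by simp)).differentiableAt (hS.mem_nhds hx)

lemma pdv_congr {f g : (Fin 2 → ℝ) → (Fin 3 → ℝ)} {S : Set (Fin 2 → ℝ)}
    (hS : IsOpen S) (hfg : EqOn f g S) {x : Fin 2 → ℝ} (hx : x ∈ S) (i : Fin 2) :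
    pdv i f x = pdv i g x := by
  unfold pdv
  rw [Filter.EventuallyEq.fderiv_eq (Filter.eventuallyEq_of_mem (hS.mem_nhds hx) hfg)]

lemma pdv_apply' {F : (Fin 2 → ℝ) → (Fin 3 → ℝ)} {x : Fin 2 → ℝ}
    (hF : DifferentiableAt ℝ F x) (j : Fin 2) (k : Fin 3) :
    pdv j F x k = fderiv ℝ (fun y => F y k) x (Pi.single j 1) := by
  have h0 := (ContinuousLinearMap.proj (R := ℝ) (φ := fun _ : Fin 3 => ℝ)
    k).hasFDerivAt.comp x hF.hasFDerivAt
  have h : HasFDerivAt (fun y => F y k)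
      ((ContinuousLinearMap.proj (R := ℝ) (φ := fun _ : Fin 3 => ℝ) k).comp (fderiv ℝ F x)) x := h0
  rw [h.fderiv]; rfl

lemma pdv_symm {f : (Fin 2 → ℝ) → (Fin 3 → ℝ)} {S : Set (Fin 2 → ℝ)}
    (hS : IsOpen S) (hf : ContDiffOn ℝ (⊤ : ℕ∞) f S) {x : Fin 2 → ℝ} (hx : x ∈ S) (i j : Fin 2) :
    pdv i (pdv j f) x = pdv j (pdv i f) x := by
  have hev : ∀ᶠ y in 𝓝 x, HasFDerivAt f (fderiv ℝ f y) y := by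
    filter_upwards [hS.mem_nhds hx] with y hy using
      (diffAt_of_contDiffOn hf hS hy).hasFDerivAt
  have hd2 : DifferentiableAt ℝ (fderiv ℝ f) x :=
    diffAt_of_contDiffOn (hf.fderiv_of_isOpen (m := (⊤ : ℕ∞)) hS (by simp)) hS hx
  have hsymm := second_derivative_symmetric_of_eventually_of_real hev hd2.hasFDerivAt
    (Pi.single i 1) (Pi.single j 1)
  have key : ∀ v w : Fin 2 → ℝ,
      fderiv ℝ (fun y => fderiv ℝ f y w) x v = (fderiv ℝ (fderiv ℝ f) x) v w := by
    intro v w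
    have h : HasFDerivAt (fun y => fderiv ℝ f y w)
        ((ContinuousLinearMap.apply ℝ (Fin 3 → ℝ) w).comp (fderiv ℝ (fderiv ℝ f) x)) x :=
      (ContinuousLinearMap.apply ℝ (Fin 3 → ℝ) w).hasFDerivAt.comp x hd2.hasFDerivAt
    rw [h.fderiv]; rfl
  show fderiv ℝ (fun y => fderiv ℝ f y (Pi.single j 1)) x (Pi.single i 1) = _
  rw [key, hsymm, ← key]; rfl

lemma pdv_cross {f g : (Fin 2 → ℝ) → (Fin 3 → ℝ)} {x : Fin 2 → ℝ}
    (hf : DifferentiableAt ℝ f x) (hg : DifferentiableAt ℝ g x) (j : Fin 2) :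
    pdv j (fun y => f y ⨯₃ g y) x = pdv j f x ⨯₃ g x + f x ⨯₃ pdv j g x := by
  have hfk : ∀ k, DifferentiableAt ℝ (fun y => f y k) x := differentiableAt_pi.mp hf
  have hgk : ∀ k, DifferentiableAt ℝ (fun y => g y k) x := differentiableAt_pi.mp hg
  have key : ∀ a b c d : Fin 3,
      fderiv ℝ (fun y => f y a * g y b - f y c * g y d) x (Pi.single j 1)
        = pdv j f x a * g x b + f x a * pdv j g x b
          - (pdv j f x c * g x d + f x c * pdv j g x d) := by
    intro a b c d
    rw [fderiv_fun_sub ((hfk a).fun_mul (hgk b)) ((hfk c).fun_mul (hgk d)),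
      fderiv_fun_mul (hfk a) (hgk b), fderiv_fun_mul (hfk c) (hgk d)]
    simp only [ContinuousLinearMap.sub_apply, ContinuousLinearMap.add_apply,
      ContinuousLinearMap.smul_apply, smul_eq_mul]
    rw [pdv_apply' hf, pdv_apply' hf, pdv_apply' hg, pdv_apply' hg]
    ring
  have hF : DifferentiableAt ℝ (fun y => f y ⨯₃ g y) x := by
    rw [differentiableAt_pi]
    intro k
    fin_cases k <;>
      · simp only [cross_apply, Matrix.cons_val_zero, Matrix.cons_val_one, Matrix.head_cons,
          Matrix.cons_val_two, Matrix.tail_cons, Fin.isValue]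
        exact ((hfk _).mul (hgk _)).sub ((hfk _).mul (hgk _))
  funext k
  rw [pdv_apply' hF j k]
  fin_cases k <;>
    · simp [cross_apply]
      rw [key]
      ring

/-! ### Smoothness combinators -/

variable {S : Set (Fin 2 → ℝ)}

lemma contDiffOn_cross3 {f g : (Fin 2 → ℝ) → (Fin 3 → ℝ)}
    (hf : ContDiffOn ℝ (⊤ : ℕ∞) f S) (hg : ContDiffOn ℝ (⊤ : ℕ∞) g S) :
    ContDiffOn ℝ (⊤ : ℕ∞) (fun x => f x ⨯₃ g x) S := by
  have hfk : ∀ k, ContDiffOn ℝ (⊤ : ℕ∞) (fun x => f x k) S := fun k => contDiffOn_pi.mp hf k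
  have hgk : ∀ k, ContDiffOn ℝ (⊤ : ℕ∞) (fun x => g x k) S := fun k => contDiffOn_pi.mp hg k
  rw [contDiffOn_pi]
  intro k
  fin_cases k <;>
    · simp only [cross_apply, Matrix.cons_val_zero, Matrix.cons_val_one, Matrix.head_cons,
        Matrix.cons_val_two, Matrix.tail_cons, Fin.zero_eta, Fin.mk_one]
      exact ((hfk _).mul (hgk _)).sub ((hfk _).mul (hgk _))

lemma contDiffOn_dot3 {f g : (Fin 2 → ℝ) → (Fin 3 → ℝ)}
    (hf : ContDiffOn ℝ (⊤ : ℕ∞) f S) (hg : ContDiffOn ℝ (⊤ : ℕ∞) g S) :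
    ContDiffOn ℝ (⊤ : ℕ∞) (fun x => f x ⬝ᵥ g x) S := by
  have hfk : ∀ k, ContDiffOn ℝ (⊤ : ℕ∞) (fun x => f x k) S := fun k => contDiffOn_pi.mp hf k
  have hgk : ∀ k, ContDiffOn ℝ (⊤ : ℕ∞) (fun x => g x k) S := fun k => contDiffOn_pi.mp hg k
  simp only [dotProduct, Fin.sum_univ_three]
  exact (((hfk 0).mul (hgk 0)).add ((hfk 1).mul (hgk 1))).add ((hfk 2).mul (hgk 2))

lemma contDiffOn_smul3 {c : (Fin 2 → ℝ) → ℝ} {f : (Fin 2 → ℝ) → (Fin 3 → ℝ)}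
    (hc : ContDiffOn ℝ (⊤ : ℕ∞) c S) (hf : ContDiffOn ℝ (⊤ : ℕ∞) f S) :
    ContDiffOn ℝ (⊤ : ℕ∞) (fun x => c x • f x) S := by
  have hfk : ∀ k, ContDiffOn ℝ (⊤ : ℕ∞) (fun x => f x k) S := fun k => contDiffOn_pi.mp hf k
  rw [contDiffOn_pi]
  intro k
  simp only [Pi.smul_apply, smul_eq_mul]
  exact hc.mul (hfk k)

/-! ### Main theorem -/

/-- If `u` is a smooth immersion on an open set `S ⊆ ℝ²` and `τ` is a smooth
infinitesimal bending of `u` on `S`, then there is a unique map `Ω` on `S` with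
`∂ᵢτ = Ω × ∂ᵢu` on `S`; moreover `Ω` is smooth on `S` and satisfies
`∂₁Ω × ∂₂u = ∂₂Ω × ∂₁u` on `S`. -/
theorem exists_unique_bending_field
    (S : Set (Fin 2 → ℝ)) (hS : IsOpen S)
    (u : (Fin 2 → ℝ) → (Fin 3 → ℝ)) (hu : ContDiffOn ℝ (⊤ : ℕ∞) u S)
    (himm : ∀ x ∈ S, LinearIndependent ℝ ![pdv 0 u x, pdv 1 u x])
    (τ : (Fin 2 → ℝ) → (Fin 3 → ℝ)) (hτ : ContDiffOn ℝ (⊤ : ℕ∞) τ S)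
    (hbend : ∀ x ∈ S, ∀ i j : Fin 2,
      pdv i u x ⬝ᵥ pdv j τ x + pdv j u x ⬝ᵥ pdv i τ x = 0) :
    ∃ Ω : (Fin 2 → ℝ) → (Fin 3 → ℝ),
      (∀ x ∈ S, ∀ i : Fin 2, pdv i τ x = Ω x ⨯₃ pdv i u x) ∧
      (∀ Ω' : (Fin 2 → ℝ) → (Fin 3 → ℝ),
        (∀ x ∈ S, ∀ i : Fin 2, pdv i τ x = Ω' x ⨯₃ pdv i u x) → EqOn Ω' Ω S) ∧
      ContDiffOn ℝ (⊤ : ℕ∞) Ω S ∧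
      (∀ x ∈ S, pdv 0 Ω x ⨯₃ pdv 1 u x = pdv 1 Ω x ⨯₃ pdv 0 u x) := by
  classical
  set n : (Fin 2 → ℝ) → (Fin 3 → ℝ) := fun x => pdv 0 u x ⨯₃ pdv 1 u x with hndef
  set Ω : (Fin 2 → ℝ) → (Fin 3 → ℝ) := fun x =>
    (n x ⬝ᵥ n x)⁻¹ • ((pdv 1 τ x ⬝ᵥ n x) • pdv 0 u x - (pdv 0 τ x ⬝ᵥ n x) • pdv 1 u x
      + (pdv 0 τ x ⬝ᵥ pdv 1 u x) • n x) with hΩdef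
  have hNne : ∀ x ∈ S, n x ⬝ᵥ n x ≠ 0 := fun x hx => cross_dot_ne (himm x hx)
  have h11 : ∀ x ∈ S, pdv 0 τ x ⬝ᵥ pdv 0 u x = 0 := by
    intro x hx
    have h := hbend x hx 0 0
    rw [dotProduct_comm]
    linarith
  have h22 : ∀ x ∈ S, pdv 1 τ x ⬝ᵥ pdv 1 u x = 0 := by
    intro x hx
    have h := hbend x hx 1 1
    rw [dotProduct_comm]
    linarith
  have h12 : ∀ x ∈ S, pdv 1 τ x ⬝ᵥ pdv 0 u x + pdv 0 τ x ⬝ᵥ pdv 1 u x = 0 := by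
    intro x hx
    have h := hbend x hx 0 1
    rw [dotProduct_comm (pdv 1 τ x), dotProduct_comm (pdv 0 τ x)]
    linarith
  have hmain : ∀ x ∈ S, ∀ i : Fin 2, pdv i τ x = Ω x ⨯₃ pdv i u x := by
    intro x hx i
    have hNx := hNne x hx
    fin_cases i
    · have hA := exA (pdv 0 u x) (pdv 1 u x) (pdv 0 τ x) (pdv 1 τ x)
      rw [h11 x hx, zero_smul, add_zero] at hA
      calc pdv 0 τ x
          = (n x ⬝ᵥ n x)⁻¹ • ((n x ⬝ᵥ n x) • pdv 0 τ x) := (inv_smul_smul₀ hNx _).symm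
        _ = (n x ⬝ᵥ n x)⁻¹ • (((pdv 1 τ x ⬝ᵥ n x) • pdv 0 u x - (pdv 0 τ x ⬝ᵥ n x) • pdv 1 u x
              + (pdv 0 τ x ⬝ᵥ pdv 1 u x) • n x) ⨯₃ pdv 0 u x) := by rw [hA]
        _ = Ω x ⨯₃ pdv 0 u x := by rw [hΩdef, ← smul_cross3]
    · have hB := exB (pdv 0 u x) (pdv 1 u x) (pdv 0 τ x) (pdv 1 τ x)
      rw [h22 x hx, zero_smul, add_zero, h12 x hx, zero_smul, add_zero] at hB
      calc pdv 1 τ x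
          = (n x ⬝ᵥ n x)⁻¹ • ((n x ⬝ᵥ n x) • pdv 1 τ x) := (inv_smul_smul₀ hNx _).symm
        _ = (n x ⬝ᵥ n x)⁻¹ • (((pdv 1 τ x ⬝ᵥ n x) • pdv 0 u x - (pdv 0 τ x ⬝ᵥ n x) • pdv 1 u x
              + (pdv 0 τ x ⬝ᵥ pdv 1 u x) • n x) ⨯₃ pdv 1 u x) := by rw [hB]
        _ = Ω x ⨯₃ pdv 1 u x := by rw [hΩdef, ← smul_cross3]
  have hΩsmooth : ContDiffOn ℝ (⊤ : ℕ∞) Ω S := by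
    have he0 : ContDiffOn ℝ (⊤ : ℕ∞) (fun x => pdv 0 u x) S := pdv_smooth hu hS 0
    have he1 : ContDiffOn ℝ (⊤ : ℕ∞) (fun x => pdv 1 u x) S := pdv_smooth hu hS 1
    have ht0 : ContDiffOn ℝ (⊤ : ℕ∞) (fun x => pdv 0 τ x) S := pdv_smooth hτ hS 0
    have ht1 : ContDiffOn ℝ (⊤ : ℕ∞) (fun x => pdv 1 τ x) S := pdv_smooth hτ hS 1
    have hn : ContDiffOn ℝ (⊤ : ℕ∞) n S := contDiffOn_cross3 he0 he1
    have hN : ContDiffOn ℝ (⊤ : ℕ∞) (fun x => n x ⬝ᵥ n x) S := contDiffOn_dot3 hn hn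
    exact contDiffOn_smul3 (hN.inv hNne)
      (((contDiffOn_smul3 (contDiffOn_dot3 ht1 hn) he0).sub
        (contDiffOn_smul3 (contDiffOn_dot3 ht0 hn) he1)).add
        (contDiffOn_smul3 (contDiffOn_dot3 ht0 he1) hn))
  refine ⟨Ω, hmain, ?_, hΩsmooth, ?_⟩
  · intro Ω' hΩ' x hx
    have hNx := hNne x hx
    have hw1 : (Ω' x - Ω x) ⨯₃ pdv 0 u x = 0 := by
      rw [sub_cross3, ← hΩ' x hx 0, ← hmain x hx 0, sub_self]
    have hw2 : (Ω' x - Ω x) ⨯₃ pdv 1 u x = 0 := by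
      rw [sub_cross3, ← hΩ' x hx 1, ← hmain x hx 1, sub_self]
    have := key_uniq hNx hw1 hw2
    exact sub_eq_zero.mp this
  · intro x hx
    have hrel0 : EqOn (pdv 0 τ) (fun y => Ω y ⨯₃ pdv 0 u y) S := fun y hy => hmain y hy 0
    have hrel1 : EqOn (pdv 1 τ) (fun y => Ω y ⨯₃ pdv 1 u y) S := fun y hy => hmain y hy 1
    have hΩd : DifferentiableAt ℝ Ω x := diffAt_of_contDiffOn hΩsmooth hS hx
    have he0d : DifferentiableAt ℝ (pdv 0 u) x :=
      diffAt_of_contDiffOn (pdv_smooth hu hS 0) hS hx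
    have he1d : DifferentiableAt ℝ (pdv 1 u) x :=
      diffAt_of_contDiffOn (pdv_smooth hu hS 1) hS hx
    have e1 := pdv_congr hS hrel0 hx 1
    rw [pdv_cross hΩd he0d 1] at e1
    have e2 := pdv_congr hS hrel1 hx 0
    rw [pdv_cross hΩd he1d 0] at e2
    have hsymτ := pdv_symm hS hτ hx 1 0
    have hsymu := pdv_symm hS hu hx 1 0
    have hcomb : pdv 1 Ω x ⨯₃ pdv 0 u x + Ω x ⨯₃ pdv 1 (pdv 0 u) x
        = pdv 0 Ω x ⨯₃ pdv 1 u x + Ω x ⨯₃ pdv 0 (pdv 1 u) x := by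
      rw [← e1, ← e2, hsymτ]
    rw [hsymu] at hcomb
    exact (add_right_cancel hcomb.symm)
end
end

section
/- Let v₁, v₂ ∈ ℝ³ be linearly independent, set n = (v₁ × v₂)/|v₁ × v₂|, let (g_{ij}) be the 2×2 matrix with entries g_{ij} = vᵢ·vⱼ and let (g^{ij}) be its inverse. Then for a₁, a₂ ∈ ℝ³ the following are equivalent: (i) a₁ × v₂ = a₂ × v₁; (ii) n·a₁ = 0, n·a₂ = 0 and Σ_{i,j∈{1,2}} g^{ij}(aᵢ·vⱼ) = 0. -/
/-! With `c = v₀ × v₁` and `w = a₀ × v₁ - a₁ × v₀`, the triple `v₀, v₁, c` is a basis of `ℝ³`,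
so `w = 0` iff `w` is orthogonal to all three. Now `w · v₀ = -(a₀ · c)` and `w · v₁ = -(a₁ · c)`
are the normal components of `a`, while by the Binet–Cauchy identity `w · c` is the pairing of
`(aᵢ · vⱼ)` with the adjugate of the Gram matrix `g`, i.e. `det g` times the trace in (ii). -/

open Matrix

noncomputable section

/-- Euclidean norm on `ℝ³`. -/
def norm3 (a : Fin 3 → ℝ) : ℝ := Real.sqrt (a ⬝ᵥ a)

section CrossProduct

variable {R : Type*}

lemma eq_zero_iff_dot_eq_zero_of_cross_ne_zero [Field R] [LinearOrder R]
    [IsStrictOrderedRing R] {u v : Fin 3 → R} (huv : u ⨯₃ v ≠ 0) (w : Fin 3 → R) :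
    w = 0 ↔ w ⬝ᵥ u = 0 ∧ w ⬝ᵥ v = 0 ∧ w ⬝ᵥ u ⨯₃ v = 0 := by
  refine ⟨fun hw => by simp [hw], fun ⟨hu, hv, huvw⟩ => ?_⟩
  have hcross : u ⨯₃ v ⨯₃ w = 0 := by
    rw [cross_cross_eq_smul_sub_smul, dotProduct_comm u, dotProduct_comm v, hu, hv]
    simp
  have hsmul : (u ⨯₃ v ⬝ᵥ u ⨯₃ v) • w = 0 := by
    simpa [cross_cross_eq_smul_sub_smul', dotProduct_comm _ w, huvw] using
      congrArg (u ⨯₃ v ⨯₃ ·) hcross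
  exact (smul_eq_zero.mp hsmul).resolve_left (by simpa using huv)

variable [CommRing R]

lemma cross_sub_cross_dot_fst (a₀ a₁ v₀ v₁ : Fin 3 → R) :
    (a₀ ⨯₃ v₁ - a₁ ⨯₃ v₀) ⬝ᵥ v₀ = -(a₀ ⬝ᵥ v₀ ⨯₃ v₁) := by
  rw [sub_dotProduct, dotProduct_comm (a₀ ⨯₃ v₁), dotProduct_comm (a₁ ⨯₃ v₀), dot_cross_self,
    triple_product_permutation, ← cross_anticomm, dotProduct_neg, sub_zero]

lemma cross_sub_cross_dot_snd (a₀ a₁ v₀ v₁ : Fin 3 → R) :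
    (a₀ ⨯₃ v₁ - a₁ ⨯₃ v₀) ⬝ᵥ v₁ = -(a₁ ⬝ᵥ v₀ ⨯₃ v₁) := by
  rw [sub_dotProduct, dotProduct_comm (a₀ ⨯₃ v₁), dotProduct_comm (a₁ ⨯₃ v₀), dot_cross_self,
    triple_product_permutation, zero_sub]

lemma det_gram_fin_two (v : Fin 2 → Fin 3 → R) :
    (of fun i j => v i ⬝ᵥ v j).det = v 0 ⨯₃ v 1 ⬝ᵥ v 0 ⨯₃ v 1 := by
  rw [det_fin_two, cross_dot_cross]
  rfl

lemma cross_sub_cross_dot_cross_eq_sum_adjugate_gram (v a : Fin 2 → Fin 3 → R) :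
    (a 0 ⨯₃ v 1 - a 1 ⨯₃ v 0) ⬝ᵥ v 0 ⨯₃ v 1 =
      ∑ i, ∑ j, (of fun i j => v i ⬝ᵥ v j).adjugate i j * (a i ⬝ᵥ v j) := by
  simp only [adjugate_fin_two, sub_dotProduct, cross_dot_cross, Fin.sum_univ_two, of_apply,
    cons_val', cons_val_zero, cons_val_one, empty_val', cons_val_fin_one]
  rw [dotProduct_comm (v 1) (v 0)]
  ring

end CrossProduct

lemma sum_inv_mul_eq_inv_det_mul_sum_adjugate_mul {ι K : Type*} [Fintype ι] [DecidableEq ι]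
    [Field K] (g : Matrix ι ι K) (B : ι → ι → K) :
    ∑ i, ∑ j, g⁻¹ i j * B i j = g.det⁻¹ * ∑ i, ∑ j, g.adjugate i j * B i j := by
  simp [inv_def, Finset.mul_sum, mul_assoc]

lemma norm3_ne_zero {c : Fin 3 → ℝ} (hc : c ≠ 0) : norm3 c ≠ 0 := by
  have hpos : 0 < c ⬝ᵥ c := (Finset.sum_nonneg fun i _ => mul_self_nonneg (c i)).lt_of_ne'
    (dotProduct_self_eq_zero.not.mpr hc)
  exact Real.sqrt_ne_zero'.mpr hpos

/-- Let `v 0, v 1 ∈ ℝ³` be linearly independent, `n` the unit normal,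
`g` the Gram matrix and `g⁻¹` its inverse. Then for `a 0, a 1 ∈ ℝ³`:
`a₁ × v₂ = a₂ × v₁` iff `n·aᵢ = 0` for `i = 1,2` and `Σᵢⱼ gⁱʲ (aᵢ·vⱼ) = 0`. -/
theorem closedness_iff_tangential_tracefree
    (v : Fin 2 → Fin 3 → ℝ) (hv : LinearIndependent ℝ v)
    (n : Fin 3 → ℝ) (hn : n = (norm3 (v 0 ⨯₃ v 1))⁻¹ • (v 0 ⨯₃ v 1))
    (g : Matrix (Fin 2) (Fin 2) ℝ) (hg : g = Matrix.of fun i j => v i ⬝ᵥ v j)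
    (a : Fin 2 → Fin 3 → ℝ) :
    a 0 ⨯₃ v 1 = a 1 ⨯₃ v 0 ↔
      ((∀ i : Fin 2, n ⬝ᵥ a i = 0) ∧ ∑ i : Fin 2, ∑ j : Fin 2, g⁻¹ i j * (a i ⬝ᵥ v j) = 0) := by
  have hc : v 0 ⨯₃ v 1 ≠ 0 :=
    crossProduct_ne_zero_iff_linearIndependent.mpr
      (by rwa [show ![v 0, v 1] = v from funext fun i => by fin_cases i <;> rfl])
  have hnormal (x : Fin 3 → ℝ) : n ⬝ᵥ x = 0 ↔ x ⬝ᵥ v 0 ⨯₃ v 1 = 0 := by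
    rw [hn, smul_dotProduct, smul_eq_mul, mul_eq_zero, inv_eq_zero, dotProduct_comm]
    simp [norm3_ne_zero hc]
  have htrace : ∑ i, ∑ j, g⁻¹ i j * (a i ⬝ᵥ v j) = 0 ↔
      (a 0 ⨯₃ v 1 - a 1 ⨯₃ v 0) ⬝ᵥ v 0 ⨯₃ v 1 = 0 := by
    rw [sum_inv_mul_eq_inv_det_mul_sum_adjugate_mul g fun i j => a i ⬝ᵥ v j, hg,
      ← cross_sub_cross_dot_cross_eq_sum_adjugate_gram, det_gram_fin_two, mul_eq_zero,
      inv_eq_zero, dotProduct_self_eq_zero]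
    simp [hc]
  rw [← sub_eq_zero, eq_zero_iff_dot_eq_zero_of_cross_ne_zero hc,
    cross_sub_cross_dot_fst, cross_sub_cross_dot_snd, Fin.forall_fin_two,
    hnormal, hnormal, htrace, neg_eq_zero, neg_eq_zero, and_assoc]
end
end
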